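/- arXiv:2505.14820 — 2 statements merged into one kernel-verified Lean document; each statement's English description precedes it below -/
import Mathlib

section
/- If there exists α ≻ 0 with subdom_α(ξ, ξ̃) = 0, then for every nonnegative weight vector θ ∈ ℝ^K with θ ⪰ 0, the linear cost θ·f(ξ) ≤ θ·f(ξ̃). In particular ξ satisfies every aspiration (θ, ν) that ξ̃ satisfies, i.e., θ·f(ξ̃) < ν implies θ·f(ξ) < ν. -/
/-- If there exists α ≻ 0 with subdom_α(ξ, ξ̃) = 0, then for every θ ⪰ 0 the
linear cost θ·f(ξ) ≤ θ·f(ξ̃); in particular ξ satisfies every aspiration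
(θ, ν) that ξ̃ satisfies. -/
theorem stmt_1 {Ξ : Type*} (K : ℕ) (f : Ξ → Fin K → ℝ) (hf : ∀ ξ k, 0 ≤ f ξ k)
    (ξ ξt : Ξ)
    (h : ∃ α : Fin K → ℝ, (∀ k, 0 < α k) ∧
      (∑ k, max (α k * (f ξ k - f ξt k) + 1) 0) = 0) :
    ∀ θ : Fin K → ℝ, (∀ k, 0 ≤ θ k) →
      ((∑ k, θ k * f ξ k) ≤ ∑ k, θ k * f ξt k ∧
        ∀ ν : ℝ, (∑ k, θ k * f ξt k) < ν → (∑ k, θ k * f ξ k) < ν) := by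
  obtain ⟨α, hα, hsum⟩ := h
  have hle : ∀ k, f ξ k ≤ f ξt k := by
    intro k
    have hzero : max (α k * (f ξ k - f ξt k) + 1) 0 = 0 := by
      have := (Finset.sum_eq_zero_iff_of_nonneg (fun i _ => le_max_right _ _)).mp hsum
      exact this k (Finset.mem_univ k)
    have h1 : α k * (f ξ k - f ξt k) + 1 ≤ 0 := by
      by_contra hc
      push_neg at hc
      rw [max_eq_left hc.le] at hzero
      linarith
    by_contra hc
    push_neg at hc
    nlinarith [mul_pos (hα k) (show (0:ℝ) < f ξ k - f ξt k by linarith)]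
  intro θ hθ
  have hmain : (∑ k, θ k * f ξ k) ≤ ∑ k, θ k * f ξt k :=
    Finset.sum_le_sum fun k _ => mul_le_mul_of_nonneg_left (hle k) (hθ k)
  exact ⟨hmain, fun ν hν => lt_of_le_of_lt hmain hν⟩
end

section
/- The sum-aggregated relative subdominance decomposes as a sum over states: relsubdom_α(ξ, Ξ̃) = Σ_{s_t ∈ ξ} Σ_k ( C̃^k(1 - α_k)/|ξ| + α_k f_k(s_t) R̃_k / |Ξ̃| ), where C̃^k = |SV_k|/|Ξ̃| and R̃_k = Σ_{ξ̃ ∈ SV_k} (Σ_{s' ∈ ξ̃} f_k(s'))^{-1}, assuming f_k(ξ̃) > 0 for all ξ̃ ∈ Ξ̃ and all k. -/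
lemma list_sum_fin_swap {S : Type*} {K : ℕ} (l : List S) (h : Fin K → S → ℝ) :
    (l.map (fun s => ∑ k : Fin K, h k s)).sum = ∑ k : Fin K, (l.map (h k)).sum := by
  induction l with
  | nil => simp
  | cons a t ih => simp [ih, Finset.sum_add_distrib]

lemma list_sum_affine {S : Type*} (l : List S) (a b : ℝ) (g : S → ℝ) :
    (l.map (fun s => a + b * g s)).sum = (l.length : ℝ) * a + b * (l.map g).sum := by
  induction l with
  | nil => simp
  | cons x t ih => push_cast; simp [ih]; ring

/-- Per-state decomposition of the sum-aggregated relative subdominance: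
relsubdom_α(ξ, Ξ̃) = Σ_{s_t ∈ ξ} Σ_k ( C̃^k(1 - α_k)/|ξ| + α_k f_k(s_t) R̃_k / |Ξ̃| ). -/
theorem stmt_6 {S : Type*} [DecidableEq S] (K : ℕ) (f : Fin K → S → ℝ)
    (hf : ∀ k s, 0 ≤ f k s) (α : Fin K → ℝ) (hα : ∀ k, 0 < α k)
    (D : Finset (List S)) (hD : D.Nonempty) (ξ : List S) (hξ : ξ ≠ [])
    (F : Fin K → List S → ℝ) (hF : ∀ k l, F k l = (l.map (f k)).sum)
    (hpos : ∀ k, ∀ ξt ∈ D, 0 < F k ξt)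
    (SV : Fin K → Finset (List S))
    (hSV : ∀ k, SV k = D.filter (fun ξt => 0 < α k * (F k ξ / F k ξt - 1) + 1)) :
    ∑ k : Fin K, (1 / (D.card : ℝ)) *
        ∑ ξt ∈ D, max (α k * (F k ξ / F k ξt - 1) + 1) 0 =
    (ξ.map (fun s => ∑ k : Fin K,
      (((SV k).card : ℝ) / (D.card : ℝ) * (1 - α k) / (ξ.length : ℝ)
        + α k * f k s * (∑ ξt ∈ SV k, (F k ξt)⁻¹) / (D.card : ℝ)))).sum := by
  have hDc : (D.card : ℝ) ≠ 0 := by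
    exact_mod_cast (Finset.card_pos.mpr hD).ne'
  have hlen : (ξ.length : ℝ) ≠ 0 := by
    have : ξ.length ≠ 0 := fun h => hξ (List.length_eq_zero_iff.mp h)
    exact_mod_cast this
  rw [list_sum_fin_swap]
  refine Finset.sum_congr rfl (fun k _ => ?_)
  have hb : (ξ.map (fun s =>
      ((SV k).card : ℝ) / (D.card : ℝ) * (1 - α k) / (ξ.length : ℝ)
        + α k * f k s * (∑ ξt ∈ SV k, (F k ξt)⁻¹) / (D.card : ℝ))).sum
      = (ξ.length : ℝ) * (((SV k).card : ℝ) / (D.card : ℝ) * (1 - α k) / (ξ.length : ℝ))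
        + (α k * (∑ ξt ∈ SV k, (F k ξt)⁻¹) / (D.card : ℝ)) * F k ξ := by
    rw [hF]
    rw [show (fun s => ((SV k).card : ℝ) / (D.card : ℝ) * (1 - α k) / (ξ.length : ℝ)
        + α k * f k s * (∑ ξt ∈ SV k, (F k ξt)⁻¹) / (D.card : ℝ))
      = fun s => ((SV k).card : ℝ) / (D.card : ℝ) * (1 - α k) / (ξ.length : ℝ)
        + (α k * (∑ ξt ∈ SV k, (F k ξt)⁻¹) / (D.card : ℝ)) * f k s from by
      funext s; ring]
    exact list_sum_affine ξ _ _ _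
  rw [hb]
  -- LHS: replace max-sum by sum over SV k
  have hmax : ∀ ξt ∈ D, max (α k * (F k ξ / F k ξt - 1) + 1) 0
      = if 0 < α k * (F k ξ / F k ξt - 1) + 1 then α k * (F k ξ / F k ξt - 1) + 1 else 0 := by
    intro ξt _
    split_ifs with h
    · exact max_eq_left h.le
    · exact max_eq_right (le_of_not_gt h)
  rw [Finset.sum_congr rfl hmax, Finset.sum_ite, Finset.sum_const_zero, add_zero, ← hSV k]
  have hterm : ∀ ξt ∈ SV k, α k * (F k ξ / F k ξt - 1) + 1
      = α k * F k ξ * (F k ξt)⁻¹ + (1 - α k) := by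
    intro ξt hξt
    have hmem : ξt ∈ D := by rw [hSV k] at hξt; exact (Finset.mem_filter.mp hξt).1
    have hne : F k ξt ≠ 0 := (hpos k ξt hmem).ne'
    field_simp
    ring
  rw [Finset.sum_congr rfl hterm, Finset.sum_add_distrib, ← Finset.mul_sum,
    Finset.sum_const, nsmul_eq_mul]
  field_simp
  ring
end
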